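/- Let T > 0 and let ψ : [0,T] → ℝ be continuously differentiable with ψ(0) = 0. Then for all t ∈ (0,T) and x > 0, the boundary-driven heat solution u(t,x) = −2∫₀ᵗ ∂ₓG(t−τ, x) ψ(τ) dτ satisfies ∂ₓu(t,x) = −2∫₀ᵗ G(τ, x) ψ'(t−τ) dτ and ∂ₓ²u(t,x) = −2∫₀ᵗ ∂ₓG(τ, x) ψ'(t−τ) dτ; in particular ∂ₓ²u is itself the boundary-driven heat solution associated with the boundary datum ψ'. -/

import Mathlib

/-- The one-dimensional heat kernel `G(t,x) = (4πt)^{−1/2} exp(−x²/(4t))`. -/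
noncomputable def heatG (t x : ℝ) : ℝ :=
  (Real.sqrt (4 * Real.pi * t))⁻¹ * Real.exp (-(x ^ 2) / (4 * t))

/-- The spatial derivative of the heat kernel,
`∂ₓG(t,x) = −(1/(4√π)) t^{−3/2} x exp(−x²/(4t))`. -/
noncomputable def heatGx (t x : ℝ) : ℝ :=
  -(1 / (4 * Real.sqrt Real.pi)) * t ^ (-(3 : ℝ) / 2) * x * Real.exp (-(x ^ 2) / (4 * t))

/-- The boundary-driven heat solution `u(t,x) = −2∫₀ᵗ ∂ₓG(t−τ, x) ψ(τ) dτ`. -/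
noncomputable def heatU (ψ : ℝ → ℝ) (t x : ℝ) : ℝ :=
  -2 * ∫ τ in (0 : ℝ)..t, heatGx (t - τ) x * ψ τ

/-!
After the substitution `τ ↦ t - τ`, `u(t,x) = -2 ∫₀ᵗ ∂ₓG(τ,x) ψ(t-τ) dτ`. For `x > 0` the kernel `G`
and its `x`-derivatives are bounded on `(0,t] × [x/2, 2x]`, because `exp(-x²/(16τ))` beats every
power of `τ`; hence one may differentiate under the integral sign, getting
`∂ₓu = -2 ∫₀ᵗ ∂ₓ²G(τ,x) ψ(t-τ) dτ`. Since `G` solves the heat equation, `∂ₓ²G = ∂_τ G`, and an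
integration by parts moves the `τ`-derivative onto `ψ(t-τ)`; the boundary terms vanish because
`ψ(0) = 0` and `G(τ,x) → 0` as `τ → 0⁺`. Differentiating once more under the integral sign gives
`∂ₓ²u`.
-/

open Real MeasureTheory Set Filter Topology Interval intervalIntegral

lemma exp_neg_le_factorial_div_pow {u : ℝ} (hu : 0 < u) (n : ℕ) :
    exp (-u) ≤ n.factorial / u ^ n := by
  rw [exp_neg, inv_le_comm₀ (exp_pos u) (by positivity), inv_div]
  exact pow_div_factorial_le_exp u hu.le n

lemma exists_rpow_mul_exp_neg_sq_div_le (p : ℝ) {a : ℝ} (ha : 0 < a) (t : ℝ) :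
    ∃ C, ∀ σ ∈ Ioc 0 t, ∀ y, a ≤ y → σ ^ p * exp (-(y ^ 2) / (4 * σ)) ≤ C := by
  -- `exp (c/σ) ≥ (c/σ)ⁿ/n!` trades the singular `σ ^ p` for `σ ^ (p + n)` with `p + n ≥ 0`.
  obtain ⟨n, hn⟩ := exists_nat_ge (-p)
  refine ⟨n.factorial / (a ^ 2 / 4) ^ n * t ^ (p + n), fun σ ⟨hσ, hσt⟩ y hy => ?_⟩
  have hE : exp (-(y ^ 2) / (4 * σ)) ≤ n.factorial / (a ^ 2 / 4) ^ n * σ ^ (n : ℝ) := calc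
    exp (-(y ^ 2) / (4 * σ)) ≤ exp (-(a ^ 2 / 4 / σ)) := by
      rw [exp_le_exp, neg_div, neg_le_neg_iff, div_div, mul_comm]
      gcongr
    _ ≤ n.factorial / (a ^ 2 / 4 / σ) ^ n := exp_neg_le_factorial_div_pow (by positivity) n
    _ = _ := by rw [rpow_natCast, div_pow _ σ, div_div_eq_mul_div]; ring
  calc σ ^ p * exp (-(y ^ 2) / (4 * σ))
      ≤ σ ^ p * (n.factorial / (a ^ 2 / 4) ^ n * σ ^ (n : ℝ)) := by gcongr
    _ = n.factorial / (a ^ 2 / 4) ^ n * σ ^ (p + n) := by rw [rpow_add hσ]; ring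
    _ ≤ _ := by gcongr; linarith

lemma rpow_neg_three_halves {t : ℝ} (ht : 0 < t) :
    t ^ (-(3 : ℝ) / 2) = t ^ (-(1 : ℝ) / 2) / t := by
  rw [eq_div_iff ht.ne', ← rpow_add_one ht.ne']; norm_num

lemma rpow_neg_five_halves {t : ℝ} (ht : 0 < t) :
    t ^ (-(5 : ℝ) / 2) = t ^ (-(1 : ℝ) / 2) / t ^ 2 := by
  rw [eq_div_iff (by positivity), ← rpow_natCast, ← rpow_add ht]; norm_num

lemma IntervalIntegrable.bdd_mul {f g : ℝ → ℝ} {a b : ℝ} {μ : Measure ℝ}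
    (hg : IntervalIntegrable g μ a b) (hf : Measurable f) (hfb : ∃ C, ∀ x ∈ Ι a b, |f x| ≤ C) :
    IntervalIntegrable (fun x => f x * g x) μ a b := by
  obtain ⟨C, hC⟩ := hfb
  rw [intervalIntegrable_iff] at hg ⊢
  exact hg.bdd_mul hf.aestronglyMeasurable
    ((ae_restrict_iff' measurableSet_uIoc).2 (ae_of_all _ hC))

theorem hasDerivAt_integral_mul_of_bounded {K K' : ℝ → ℝ → ℝ} {φ : ℝ → ℝ} {a b x : ℝ}
    {μ : Measure ℝ} {s : Set ℝ} (hs : s ∈ 𝓝 x) (hφ : IntervalIntegrable φ μ a b)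
    (hK : ∀ y, Measurable fun σ => K σ y) (hK' : Measurable fun σ => K' σ x)
    (hKx : ∃ C, ∀ σ ∈ Ι a b, |K σ x| ≤ C)
    (hK's : ∃ C, ∀ σ ∈ Ι a b, ∀ y ∈ s, |K' σ y| ≤ C)
    (hderiv : ∀ σ ∈ Ι a b, ∀ y ∈ s, HasDerivAt (K σ) (K' σ y) y) :
    HasDerivAt (fun y => ∫ σ in a..b, K σ y * φ σ ∂μ) (∫ σ in a..b, K' σ x * φ σ ∂μ) x := by
  obtain ⟨C, hC⟩ := hK's
  have hφm : AEStronglyMeasurable φ (μ.restrict (Ι a b)) := hφ.def'.aestronglyMeasurable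
  refine (hasDerivAt_integral_of_dominated_loc_of_deriv_le (bound := fun σ => C * ‖φ σ‖) hs
    (.of_forall fun y => (hK y).aestronglyMeasurable.mul hφm) (hφ.bdd_mul (hK x) hKx)
    (hK'.aestronglyMeasurable.mul hφm) (ae_of_all _ fun σ hσ y hy => ?_) (hφ.norm.const_mul C)
    (ae_of_all _ fun σ hσ y hy => (hderiv σ hσ y hy).mul_const (φ σ))).2
  rw [norm_mul, Real.norm_eq_abs]
  exact mul_le_mul_of_nonneg_right (hC σ hσ y hy) (norm_nonneg _)

noncomputable def heatGxx (t x : ℝ) : ℝ :=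
  (8 * √π)⁻¹ * (x ^ 2 * t ^ (-(5 : ℝ) / 2) - 2 * t ^ (-(3 : ℝ) / 2)) * exp (-(x ^ 2) / (4 * t))

-- As `√0 = 0` and `0⁻¹ = 0`, this is the continuous extension of `heatG · x` to `0` for `x ≠ 0`.
lemma heatG_zero (x : ℝ) : heatG 0 x = 0 := by simp [heatG]

lemma heatG_eq_rpow {t : ℝ} (ht : 0 < t) (x : ℝ) :
    heatG t x = (2 * √π)⁻¹ * t ^ (-(1 : ℝ) / 2) * exp (-(x ^ 2) / (4 * t)) := by
  rw [heatG, show 4 * π * t = 2 ^ 2 * π * t by ring, sqrt_mul (by positivity),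
    sqrt_mul (by positivity), sqrt_sq zero_le_two, show -(1 : ℝ) / 2 = -(1 / 2) by ring,
    rpow_neg ht.le, ← sqrt_eq_rpow, mul_inv]

lemma hasDerivAt_exp_neg_sq_div (t x : ℝ) :
    HasDerivAt (fun y => exp (-(y ^ 2) / (4 * t)))
      (-(x / (2 * t)) * exp (-(x ^ 2) / (4 * t))) x := by
  refine (((hasDerivAt_pow 2 x).fun_neg).div_const (4 * t)).exp.congr_deriv ?_
  field_simp
  ring

lemma hasDerivAt_heatG {t : ℝ} (ht : 0 < t) (x : ℝ) : HasDerivAt (heatG t) (heatGx t x) x := by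
  have h := (hasDerivAt_exp_neg_sq_div t x).const_mul ((2 * √π)⁻¹ * t ^ (-(1 : ℝ) / 2))
  rw [funext (heatG_eq_rpow ht)]
  refine h.congr_deriv ?_
  unfold heatGx
  rw [rpow_neg_three_halves ht]
  have hπ := sqrt_pos.2 pi_pos
  field_simp
  ring

lemma hasDerivAt_heatGx {t : ℝ} (ht : 0 < t) (x : ℝ) :
    HasDerivAt (heatGx t) (heatGxx t x) x := by
  have h := ((hasDerivAt_id' x).const_mul (-(1 / (4 * √π)) * t ^ (-(3 : ℝ) / 2))).mul
    (hasDerivAt_exp_neg_sq_div t x)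
  refine h.congr_deriv ?_
  unfold heatGxx
  rw [rpow_neg_three_halves ht, rpow_neg_five_halves ht]
  have hπ := sqrt_pos.2 pi_pos
  field_simp
  ring

lemma hasDerivAt_heatG_time {t : ℝ} (ht : 0 < t) (x : ℝ) :
    HasDerivAt (fun s => heatG s x) (heatGxx t x) t := by
  have h1 :
      HasDerivAt (fun s : ℝ => s ^ (-(1 : ℝ) / 2)) (-(1 : ℝ) / 2 * t ^ (-(1 : ℝ) / 2 - 1)) t :=
    hasDerivAt_rpow_const (Or.inl ht.ne')
  have h2 : HasDerivAt (fun s => -(x ^ 2) / (4 * s)) (-(x ^ 2) / 4 * -(t ^ 2)⁻¹) t := by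
    rw [show (fun s => -(x ^ 2) / (4 * s)) = fun s => -(x ^ 2) / 4 * s⁻¹ by ext s; ring]
    exact (hasDerivAt_inv ht.ne').const_mul _
  have h := (h1.const_mul (2 * √π)⁻¹).mul h2.exp
  refine (h.congr_of_eventuallyEq ?_).congr_deriv ?_
  · filter_upwards [Ioi_mem_nhds ht] with s hs
    rw [heatG_eq_rpow hs]
    rfl
  · unfold heatGxx
    rw [show -(1 : ℝ) / 2 - 1 = -(3 : ℝ) / 2 by norm_num, rpow_neg_three_halves ht,
      rpow_neg_five_halves ht]
    have hπ := sqrt_pos.2 pi_pos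
    field_simp
    ring

lemma measurable_heatG (x : ℝ) : Measurable fun t => heatG t x := by unfold heatG; fun_prop

lemma measurable_heatGx (x : ℝ) : Measurable fun t => heatGx t x := by unfold heatGx; fun_prop

lemma measurable_heatGxx (x : ℝ) : Measurable fun t => heatGxx t x := by unfold heatGxx; fun_prop

lemma exists_abs_heatG_le {a : ℝ} (ha : 0 < a) (T : ℝ) :
    ∃ C, ∀ t ∈ Ioc 0 T, ∀ x, a ≤ x → |heatG t x| ≤ C := by
  obtain ⟨C, hC⟩ := exists_rpow_mul_exp_neg_sq_div_le (-(1 : ℝ) / 2) ha T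
  refine ⟨(2 * √π)⁻¹ * C, fun t ht x hx => ?_⟩
  have ht0 := ht.1
  rw [heatG_eq_rpow ht0, mul_assoc, abs_of_nonneg (by positivity)]
  exact mul_le_mul_of_nonneg_left (hC t ht x hx) (by positivity)

lemma exists_abs_heatGx_le {a b : ℝ} (ha : 0 < a) (T : ℝ) :
    ∃ C, ∀ t ∈ Ioc 0 T, ∀ x ∈ Icc a b, |heatGx t x| ≤ C := by
  obtain ⟨C, hC⟩ := exists_rpow_mul_exp_neg_sq_div_le (-(3 : ℝ) / 2) ha T
  refine ⟨(4 * √π)⁻¹ * b * C, fun t ht x hx => ?_⟩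
  have ht0 := ht.1
  have hx0 : 0 < x := ha.trans_le hx.1
  have h :
      heatGx t x = -((4 * √π)⁻¹ * x * (t ^ (-(3 : ℝ) / 2) * exp (-(x ^ 2) / (4 * t)))) := by
    rw [heatGx]; ring
  have hxb := hx.2
  have hE := hC t ht x hx.1
  rw [h, abs_neg, abs_of_nonneg (by positivity)]
  gcongr
  exact mul_nonneg (by positivity) (hx0.le.trans hxb)

lemma exists_abs_heatGxx_le {a b : ℝ} (ha : 0 < a) (T : ℝ) :
    ∃ C, ∀ t ∈ Ioc 0 T, ∀ x ∈ Icc a b, |heatGxx t x| ≤ C := by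
  obtain ⟨C₃, hC₃⟩ := exists_rpow_mul_exp_neg_sq_div_le (-(3 : ℝ) / 2) ha T
  obtain ⟨C₅, hC₅⟩ := exists_rpow_mul_exp_neg_sq_div_le (-(5 : ℝ) / 2) ha T
  refine ⟨(8 * √π)⁻¹ * (b ^ 2 * C₅ + 2 * C₃), fun t ht x hx => ?_⟩
  have ht0 := ht.1
  have hx0 : 0 < x := ha.trans_le hx.1
  have h : heatGxx t x = (8 * √π)⁻¹ * (x ^ 2 * (t ^ (-(5 : ℝ) / 2) * exp (-(x ^ 2) / (4 * t)))
      - 2 * (t ^ (-(3 : ℝ) / 2) * exp (-(x ^ 2) / (4 * t)))) := by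
    rw [heatGxx]; ring
  rw [h, abs_mul, abs_of_pos (by positivity)]
  gcongr
  refine (abs_sub _ _).trans ?_
  have hxb := hx.2
  have hE₃ := hC₃ t ht x hx.1
  have hE₅ := hC₅ t ht x hx.1
  rw [abs_of_nonneg (by positivity), abs_of_nonneg (by positivity)]
  gcongr

lemma tendsto_heatG_nhdsGT_zero {x : ℝ} (hx : x ≠ 0) :
    Tendsto (fun t => heatG t x) (𝓝[>] 0) (𝓝 0) := by
  have h := ((tendsto_rpow_mul_exp_neg_mul_atTop_nhds_zero (1 / 2) (x ^ 2 / 4)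
    (by positivity)).comp tendsto_inv_nhdsGT_zero).const_mul (2 * √π)⁻¹
  rw [mul_zero] at h
  refine h.congr' ?_
  filter_upwards [self_mem_nhdsWithin] with t ht
  rw [heatG_eq_rpow ht, Function.comp_apply, inv_rpow ht.le, ← rpow_neg ht.le]
  ring_nf

lemma continuousOn_heatG {x : ℝ} (hx : x ≠ 0) :
    ContinuousOn (fun t => heatG t x) (Ici 0) := by
  intro t ht
  rcases (show (0 : ℝ) ≤ t from ht).eq_or_lt with rfl | ht
  · rw [← continuousWithinAt_Ioi_iff_Ici, ContinuousWithinAt, heatG_zero]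
    exact tendsto_heatG_nhdsGT_zero hx
  · exact (hasDerivAt_heatG_time ht x).continuousAt.continuousWithinAt

lemma hasDerivAt_integral_heatG_mul {t x : ℝ} (ht : 0 ≤ t) (hx : 0 < x) {φ : ℝ → ℝ}
    (hφ : IntervalIntegrable φ volume 0 t) :
    HasDerivAt (fun y => ∫ σ in 0..t, heatG σ y * φ σ) (∫ σ in 0..t, heatGx σ x * φ σ) x := by
  obtain ⟨C, hC⟩ := exists_abs_heatG_le hx t
  obtain ⟨C', hC'⟩ := exists_abs_heatGx_le (half_pos hx) (b := 2 * x) t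
  have hs : Icc (x / 2) (2 * x) ∈ 𝓝 x := Icc_mem_nhds (half_lt_self hx) (by linarith)
  refine hasDerivAt_integral_mul_of_bounded hs hφ
    measurable_heatG (measurable_heatGx x) ?_ ?_ ?_ <;> rw [uIoc_of_le ht]
  · exact ⟨C, fun σ hσ => hC σ hσ x le_rfl⟩
  · exact ⟨C', hC'⟩
  · exact fun σ hσ y _ => hasDerivAt_heatG hσ.1 y

lemma hasDerivAt_integral_heatGx_mul {t x : ℝ} (ht : 0 ≤ t) (hx : 0 < x) {φ : ℝ → ℝ}
    (hφ : IntervalIntegrable φ volume 0 t) :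
    HasDerivAt (fun y => ∫ σ in 0..t, heatGx σ y * φ σ) (∫ σ in 0..t, heatGxx σ x * φ σ) x := by
  obtain ⟨C, hC⟩ := exists_abs_heatGx_le hx (b := x) t
  obtain ⟨C', hC'⟩ := exists_abs_heatGxx_le (half_pos hx) (b := 2 * x) t
  have hs : Icc (x / 2) (2 * x) ∈ 𝓝 x := Icc_mem_nhds (half_lt_self hx) (by linarith)
  refine hasDerivAt_integral_mul_of_bounded hs hφ
    measurable_heatGx (measurable_heatGxx x) ?_ ?_ ?_ <;> rw [uIoc_of_le ht]
  · exact ⟨C, fun σ hσ => hC σ hσ x ⟨le_rfl, le_rfl⟩⟩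
  · exact ⟨C', hC'⟩
  · exact fun σ hσ y _ => hasDerivAt_heatGx hσ.1 y

lemma integral_heatGxx_mul_eq {t x : ℝ} (ht : 0 ≤ t) (hx : 0 < x) {ψ : ℝ → ℝ}
    (hψ : ContDiff ℝ 1 ψ) (hψ0 : ψ 0 = 0) :
    ∫ σ in 0..t, heatGxx σ x * ψ (t - σ) = ∫ σ in 0..t, heatG σ x * deriv ψ (t - σ) := by
  have hψ' (σ : ℝ) : HasDerivAt (fun σ => ψ (t - σ)) (-deriv ψ (t - σ)) σ :=
    (hψ.differentiable one_ne_zero _).hasDerivAt.comp_const_sub t σ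
  have hψ'c : Continuous fun σ => deriv ψ (t - σ) :=
    (hψ.continuous_deriv le_rfl).comp (continuous_sub_left t)
  obtain ⟨C, hC⟩ := exists_abs_heatGxx_le hx (b := x) t
  have hGxx : IntervalIntegrable (fun σ => heatGxx σ x) volume 0 t := by
    simpa using (intervalIntegrable_const (c := (1 : ℝ))).bdd_mul (measurable_heatGxx x)
      ⟨C, fun σ hσ => hC σ (uIoc_of_le ht ▸ hσ) x ⟨le_rfl, le_rfl⟩⟩
  have hibp := integral_mul_deriv_eq_deriv_mul_of_hasDeriv_right
    ((continuousOn_heatG hx.ne').mono (uIcc_of_le ht ▸ Icc_subset_Ici_self))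
    (fun σ _ => (hψ' σ).continuousAt.continuousWithinAt)
    (fun σ hσ => (hasDerivAt_heatG_time (min_eq_left ht ▸ hσ.1) x).hasDerivWithinAt)
    (fun σ _ => (hψ' σ).hasDerivWithinAt) hGxx (hψ'c.neg.intervalIntegrable (μ := volume) 0 t)
  simp only [mul_neg, intervalIntegral.integral_neg, sub_self, hψ0, heatG_zero, mul_zero,
    zero_mul] at hibp
  linarith

lemma heatU_eq_integral_sub (ψ : ℝ → ℝ) (t x : ℝ) :
    heatU ψ t x = -2 * ∫ σ in 0..t, heatGx σ x * ψ (t - σ) := by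
  have h := integral_comp_sub_left (a := 0) (b := t) (fun σ => heatGx σ x * ψ (t - σ)) t
  simp only [sub_sub_cancel, sub_zero, sub_self] at h
  rw [heatU, h]

lemma deriv_heatU {t x : ℝ} (ht : 0 ≤ t) (hx : 0 < x) {ψ : ℝ → ℝ} (hψ : ContDiff ℝ 1 ψ)
    (hψ0 : ψ 0 = 0) :
    deriv (heatU ψ t) x = -2 * ∫ σ in 0..t, heatG σ x * deriv ψ (t - σ) := by
  have hφ := (hψ.continuous.comp (continuous_sub_left t)).intervalIntegrable (μ := volume) 0 t
  rw [funext (heatU_eq_integral_sub ψ t), ← integral_heatGxx_mul_eq ht hx hψ hψ0]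
  exact ((hasDerivAt_integral_heatGx_mul ht hx hφ).const_mul (-2)).deriv

theorem stmt9_general (T : ℝ) (ψ : ℝ → ℝ) (hψ : ContDiff ℝ 1 ψ) (hψ0 : ψ 0 = 0) :
    ∀ t ∈ Set.Ioo (0 : ℝ) T, ∀ x : ℝ, 0 < x →
      (deriv (fun y => heatU ψ t y) x = -2 * ∫ τ in (0 : ℝ)..t, heatG τ x * deriv ψ (t - τ)) ∧
      (deriv (fun y => deriv (fun z => heatU ψ t z) y) x =
        -2 * ∫ τ in (0 : ℝ)..t, heatGx τ x * deriv ψ (t - τ)) := by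
  intro t ht x hx
  have hφ := ((hψ.continuous_deriv le_rfl).comp (continuous_sub_left t)).intervalIntegrable
    (μ := volume) 0 t
  have hU' :
      deriv (heatU ψ t) =ᶠ[𝓝 x] fun y => -2 * ∫ σ in 0..t, heatG σ y * deriv ψ (t - σ) := by
    filter_upwards [Ioi_mem_nhds hx] with y hy using deriv_heatU ht.1.le hy hψ hψ0
  refine ⟨hU'.self_of_nhds, ?_⟩
  rw [hU'.deriv_eq]
  exact ((hasDerivAt_integral_heatG_mul ht.1.le hx hφ).const_mul (-2)).deriv

/-- For `ψ` continuously differentiable with `ψ(0) = 0`, the spatial derivatives of the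
boundary-driven heat solution satisfy `∂ₓu(t,x) = −2∫₀ᵗ G(τ,x) ψ'(t−τ) dτ` and
`∂ₓ²u(t,x) = −2∫₀ᵗ ∂ₓG(τ,x) ψ'(t−τ) dτ`; in particular `∂ₓ²u` is the boundary-driven
heat solution associated with the boundary datum `ψ'`. -/
theorem stmt9 (T : ℝ) (hT : 0 < T) (ψ : ℝ → ℝ) (hψ : ContDiff ℝ 1 ψ) (hψ0 : ψ 0 = 0) :
    ∀ t ∈ Set.Ioo (0 : ℝ) T, ∀ x : ℝ, 0 < x →
      (deriv (fun y => heatU ψ t y) x = -2 * ∫ τ in (0 : ℝ)..t, heatG τ x * deriv ψ (t - τ)) ∧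
      (deriv (fun y => deriv (fun z => heatU ψ t z) y) x =
        -2 * ∫ τ in (0 : ℝ)..t, heatGx τ x * deriv ψ (t - τ)) :=
  stmt9_general T ψ hψ hψ0
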